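/- For n ∈ ℕ, the map A ↦ conj(U_{2n})·A·U_{2n}ᵀ is an ℝ-algebra isomorphism from π̄(2n) = {A ∈ gl(2n,ℂ) : R·conj(A)·R = A} onto gl(2n,ℝ). That is, the map is ℝ-linear, multiplicative, bijective, and A ∈ π̄(2n) if and only if conj(U_{2n})·A·U_{2n}ᵀ has all real entries. -/
import Mathlib
open Matrix

def revM (n : ℕ) : Matrix (Fin n) (Fin n) ℂ :=
  fun i j => if (i : ℕ) + (j : ℕ) + 1 = n then 1 else 0

noncomputable def U2 (n : ℕ) : Matrix (Fin n ⊕ Fin n) (Fin n ⊕ Fin n) ℂ :=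
  ((Real.sqrt 2 : ℂ))⁻¹ •
    Matrix.fromBlocks 1 (revM n) (Complex.I • revM n) (-(Complex.I • (1 : Matrix (Fin n) (Fin n) ℂ)))

def rev2 (n : ℕ) : Matrix (Fin n ⊕ Fin n) (Fin n ⊕ Fin n) ℂ :=
  Matrix.fromBlocks 0 (revM n) (revM n) 0

def pibar2 (n : ℕ) : Set (Matrix (Fin n ⊕ Fin n) (Fin n ⊕ Fin n) ℂ) :=
  {A | rev2 n * A.map (starRingEnd ℂ) * rev2 n = A}

noncomputable def Phi (n : ℕ) (A : Matrix (Fin n ⊕ Fin n) (Fin n ⊕ Fin n) ℂ) :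
    Matrix (Fin n ⊕ Fin n) (Fin n ⊕ Fin n) ℂ :=
  (U2 n).map (starRingEnd ℂ) * A * (U2 n)ᵀ


lemma revM_apply (n : ℕ) (i j : Fin n) : revM n i j = if j = i.rev then 1 else 0 := by
  have hi := i.isLt
  unfold revM
  congr 1
  rw [eq_iff_iff, Fin.ext_iff, Fin.val_rev]
  omega

lemma revM_apply' (n : ℕ) (i j : Fin n) : revM n i j = if i = j.rev then 1 else 0 := by
  have hj := j.isLt
  unfold revM
  congr 1
  rw [eq_iff_iff, Fin.ext_iff, Fin.val_rev]
  omega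

lemma revM_transpose (n : ℕ) : (revM n)ᵀ = revM n := by
  ext i j
  rw [Matrix.transpose_apply]
  unfold revM
  congr 1
  rw [eq_iff_iff]; omega

lemma revM_conj (n : ℕ) : (revM n).map (starRingEnd ℂ) = revM n := by
  ext i j
  simp only [Matrix.map_apply, revM]
  split <;> simp

lemma revM_mul_self (n : ℕ) : revM n * revM n = 1 := by
  ext i j
  rw [Matrix.mul_apply]
  simp only [revM_apply n i, revM_apply' n _ j, ite_mul, one_mul, zero_mul]
  rw [Finset.sum_ite_eq']
  simp [Matrix.one_apply, Fin.rev_inj, eq_comm]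

lemma rev2_mul_self (n : ℕ) : rev2 n * rev2 n = 1 := by
  unfold rev2
  rw [Matrix.fromBlocks_multiply]
  simp [revM_mul_self, Matrix.fromBlocks_one]

lemma hc2 : ((Real.sqrt 2 : ℂ))⁻¹ * ((Real.sqrt 2 : ℂ))⁻¹ * 2 = 1 := by
  rw [← mul_inv, ← Complex.ofReal_mul, Real.mul_self_sqrt (by norm_num)]
  norm_num

lemma conj_c : (starRingEnd ℂ) ((Real.sqrt 2 : ℂ))⁻¹ = ((Real.sqrt 2 : ℂ))⁻¹ := by
  rw [map_inv₀, Complex.conj_ofReal]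

lemma U2_conj (n : ℕ) : (U2 n).map (starRingEnd ℂ) =
    ((Real.sqrt 2 : ℂ))⁻¹ • Matrix.fromBlocks 1 (revM n)
      (-(Complex.I • revM n)) (Complex.I • (1 : Matrix (Fin n) (Fin n) ℂ)) := by
  unfold U2
  ext i j
  simp only [Matrix.map_apply, Matrix.smul_apply, smul_eq_mul, _root_.map_mul, conj_c]
  congr 1
  cases i <;> cases j <;>
    simp [Matrix.fromBlocks, Matrix.one_apply, revM, apply_ite (starRingEnd ℂ),
      Complex.conj_I] <;> split_ifs <;> simp

lemma U2_transpose (n : ℕ) : (U2 n)ᵀ =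
    ((Real.sqrt 2 : ℂ))⁻¹ • Matrix.fromBlocks 1 (Complex.I • revM n)
      (revM n) (-(Complex.I • (1 : Matrix (Fin n) (Fin n) ℂ))) := by
  unfold U2
  rw [Matrix.transpose_smul, Matrix.fromBlocks_transpose]
  simp [revM_transpose, Matrix.transpose_smul]

lemma two_one : (1 : Matrix (Fin n) (Fin n) ℂ) + 1 = (2:ℂ) • 1 := by
  rw [two_smul]

lemma VW (n : ℕ) : (U2 n).map (starRingEnd ℂ) * (U2 n)ᵀ = 1 := by
  rw [U2_conj, U2_transpose, Matrix.smul_mul, Matrix.mul_smul, smul_smul,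
    Matrix.fromBlocks_multiply]
  simp only [Matrix.one_mul, Matrix.mul_one, Matrix.mul_smul, Matrix.smul_mul,
    Matrix.mul_neg, Matrix.neg_mul, smul_smul,
    Complex.I_mul_I, revM_mul_self, neg_neg, neg_smul, one_smul,
    add_neg_cancel, neg_add_cancel, smul_neg]
  rw [two_one, show (0 : Matrix (Fin n) (Fin n) ℂ) = (2:ℂ) • 0 from (smul_zero _).symm,
    ← Matrix.fromBlocks_smul, smul_smul, hc2, one_smul, Matrix.fromBlocks_one]

lemma WV (n : ℕ) : (U2 n)ᵀ * (U2 n).map (starRingEnd ℂ) = 1 := by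
  rw [U2_conj, U2_transpose, Matrix.smul_mul, Matrix.mul_smul, smul_smul,
    Matrix.fromBlocks_multiply]
  simp only [Matrix.one_mul, Matrix.mul_one, Matrix.mul_smul, Matrix.smul_mul,
    Matrix.mul_neg, Matrix.neg_mul, smul_smul,
    Complex.I_mul_I, revM_mul_self, neg_neg, neg_smul, one_smul,
    add_neg_cancel, neg_add_cancel, smul_neg]
  rw [two_one, show (0 : Matrix (Fin n) (Fin n) ℂ) = (2:ℂ) • 0 from (smul_zero _).symm,
    ← Matrix.fromBlocks_smul, smul_smul, hc2, one_smul, Matrix.fromBlocks_one]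

lemma UR (n : ℕ) : U2 n * rev2 n = (U2 n).map (starRingEnd ℂ) := by
  rw [U2_conj]
  unfold U2 rev2
  rw [Matrix.smul_mul, Matrix.fromBlocks_multiply]
  simp [revM_mul_self, Matrix.mul_smul, Matrix.smul_mul]


lemma rev2_transpose (n : ℕ) : (rev2 n)ᵀ = rev2 n := by
  unfold rev2
  rw [Matrix.fromBlocks_transpose, revM_transpose]
  simp

lemma conj_conj (M : Matrix (Fin n ⊕ Fin n) (Fin n ⊕ Fin n) ℂ) :
    (M.map (starRingEnd ℂ)).map (starRingEnd ℂ) = M := by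
  ext i j; simp

-- U = V * rev2
lemma U_eq (n : ℕ) : (U2 n).map (starRingEnd ℂ) * rev2 n = U2 n := by
  rw [← UR, Matrix.mul_assoc, rev2_mul_self, Matrix.mul_one]

-- conj(W) = rev2 * W
lemma conjW (n : ℕ) : ((U2 n)ᵀ).map (starRingEnd ℂ) = rev2 n * (U2 n)ᵀ := by
  have h := congrArg Matrix.transpose (UR n)
  rw [Matrix.transpose_mul, rev2_transpose] at h
  rw [h]
  exact Matrix.transpose_map

lemma Phi_cancel (n : ℕ) (A : Matrix (Fin n ⊕ Fin n) (Fin n ⊕ Fin n) ℂ) :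
    (U2 n)ᵀ * Phi n A * (U2 n).map (starRingEnd ℂ) = A := by
  unfold Phi
  rw [← Matrix.mul_assoc, ← Matrix.mul_assoc, WV, Matrix.one_mul,
    Matrix.mul_assoc, WV, Matrix.mul_one]

lemma Phi_inj (n : ℕ) : Function.Injective (Phi n) := by
  intro A B h
  rw [← Phi_cancel n A, h, Phi_cancel]

lemma conj_Phi (n : ℕ) (A : Matrix (Fin n ⊕ Fin n) (Fin n ⊕ Fin n) ℂ) :
    (Phi n A).map (starRingEnd ℂ) = Phi n (rev2 n * A.map (starRingEnd ℂ) * rev2 n) := by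
  unfold Phi
  rw [Matrix.map_mul, Matrix.map_mul, conj_conj, conjW, ← Matrix.mul_assoc]
  conv_rhs => rw [← Matrix.mul_assoc, ← Matrix.mul_assoc, U_eq]

theorem pibar2_iso_real (n : ℕ) :
    (∀ A B, Phi n (A + B) = Phi n A + Phi n B) ∧
    (∀ (a : ℝ) A, Phi n ((a : ℂ) • A) = (a : ℂ) • Phi n A) ∧
    (∀ A B, Phi n (A * B) = Phi n A * Phi n B) ∧
    Function.Injective (Phi n) ∧
    (∀ A, A ∈ pibar2 n ↔ ∀ i j, (Phi n A i j).im = 0) ∧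
    (∀ B : Matrix (Fin n ⊕ Fin n) (Fin n ⊕ Fin n) ℂ,
      (∀ i j, (B i j).im = 0) → ∃ A ∈ pibar2 n, Phi n A = B) := by
  have hmem : ∀ A, A ∈ pibar2 n ↔ ∀ i j, (Phi n A i j).im = 0 := by
    intro A
    constructor
    · intro hA i j
      have : (Phi n A).map (starRingEnd ℂ) = Phi n A := by
        rw [conj_Phi, hA]
      have := congrFun (congrFun this i) j
      simp only [Matrix.map_apply] at this
      exact (Complex.conj_eq_iff_im).mp this
    · intro h
      apply Phi_inj n
      rw [← conj_Phi]
      ext i j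
      simp only [Matrix.map_apply]
      exact Complex.conj_eq_iff_im.mpr (h i j)
  refine ⟨?_, ?_, ?_, Phi_inj n, hmem, ?_⟩
  · intro A B
    simp [Phi, Matrix.mul_add, Matrix.add_mul]
  · intro a A
    simp [Phi, Matrix.mul_smul, Matrix.smul_mul]
  · intro A B
    unfold Phi
    rw [Matrix.mul_assoc ((U2 n).map (starRingEnd ℂ) * A)]
    rw [show (U2 n)ᵀ * ((U2 n).map (starRingEnd ℂ) * B * (U2 n)ᵀ) =
        B * (U2 n)ᵀ from by rw [← Matrix.mul_assoc, ← Matrix.mul_assoc, WV, Matrix.one_mul]]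
    rw [← Matrix.mul_assoc, ← Matrix.mul_assoc]
  · intro B hB
    refine ⟨(U2 n)ᵀ * B * (U2 n).map (starRingEnd ℂ), ?_, ?_⟩
    · rw [hmem]
      intro i j
      have : Phi n ((U2 n)ᵀ * B * (U2 n).map (starRingEnd ℂ)) = B := by
        unfold Phi
        rw [← Matrix.mul_assoc, ← Matrix.mul_assoc, VW, Matrix.one_mul,
          Matrix.mul_assoc, VW, Matrix.mul_one]
      rw [this]; exact hB i j
    · unfold Phi
      rw [← Matrix.mul_assoc, ← Matrix.mul_assoc, VW, Matrix.one_mul,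
        Matrix.mul_assoc, VW, Matrix.mul_one]
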